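/- There exists a constant c > 0 such that for all sufficiently large n with n ≡ 4 (mod 8), the number of jammed signed graphs on the labeled vertex set {1, …, n} is at least 2^{c · n · log₂ n}. -/

import Mathlib

open Finset

/-- A signed graph on `n` vertices: `true` = friendship (+1), `false` = enmity (−1). -/
abbrev SignedGraph (n : ℕ) := Fin n → Fin n → Bool

/-- The sign assignment is symmetric (it is an assignment to undirected edges). -/
def Symm {n : ℕ} (G : SignedGraph n) : Prop := ∀ u v, G u v = G v u

/-- The triad `{u,v,w}` is balanced: it contains an even number (0 or 2) of enmity edges. -/
def BalancedTriad {n : ℕ} (G : SignedGraph n) (u v w : Fin n) : Prop :=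
  Bool.xor (G u v) (Bool.xor (G v w) (G u w)) = true

instance {n : ℕ} (G : SignedGraph n) (u v w : Fin n) :
    Decidable (BalancedTriad G u v w) :=
  inferInstanceAs (Decidable (_ = true))

/-- The rank of the edge `(u,v)`: the number of imbalanced triads containing it. -/
def rank {n : ℕ} (G : SignedGraph n) (u v : Fin n) : ℕ :=
  (univ.filter (fun w => w ≠ u ∧ w ≠ v ∧ ¬ BalancedTriad G u v w)).card

/-- A signed graph is balanced if every triad is balanced. -/
def IsBalanced {n : ℕ} (G : SignedGraph n) : Prop :=
  ∀ u v w : Fin n, u ≠ v → v ≠ w → u ≠ w → BalancedTriad G u v w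

/-- A signed graph is jammed if it is not balanced and every edge `e`
satisfies `2 * r_e < n - 2`. -/
def IsJammed {n : ℕ} (G : SignedGraph n) : Prop :=
  ¬ IsBalanced G ∧ ∀ u v : Fin n, u ≠ v → 2 * rank G u v < n - 2

/-- Flipping (reversing the sign of) the undirected edge `p`. -/
def flipEdge {n : ℕ} (G : SignedGraph n) (p : Sym2 (Fin n)) : SignedGraph n :=
  fun x y => if s(x, y) = p then !(G x y) else G x y

/-- A CTD-admissible flipEdge: the edge lies in some imbalanced triad and `2 r_e ≥ n - 2`. -/
def CTDAdmissible {n : ℕ} (G : SignedGraph n) (p : Sym2 (Fin n)) : Prop :=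
  ∃ u v : Fin n, p = s(u, v) ∧ u ≠ v ∧
    (∃ w, w ≠ u ∧ w ≠ v ∧ ¬ BalancedTriad G u v w) ∧
    n - 2 ≤ 2 * rank G u v

/-- A BED-admissible flipEdge: there is an imbalanced triad containing the edge
in which the edge has maximal rank. -/
def BEDAdmissible {n : ℕ} (G : SignedGraph n) (p : Sym2 (Fin n)) : Prop :=
  ∃ u v w : Fin n, p = s(u, v) ∧ u ≠ v ∧ w ≠ u ∧ w ≠ v ∧
    ¬ BalancedTriad G u v w ∧
    rank G v w ≤ rank G u v ∧ rank G u w ≤ rank G u v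

/-- `FlipSeq Adm G L H`: the list of edges `L` is a sequence of `Adm`-admissible flips
transforming `G` into `H`. -/
inductive FlipSeq {n : ℕ} (Adm : SignedGraph n → Sym2 (Fin n) → Prop) :
    SignedGraph n → List (Sym2 (Fin n)) → SignedGraph n → Prop
  | nil (G : SignedGraph n) : FlipSeq Adm G [] G
  | cons {G H : SignedGraph n} {L : List (Sym2 (Fin n))} (p : Sym2 (Fin n)) :
      Adm G p → FlipSeq Adm (flipEdge G p) L H → FlipSeq Adm G (p :: L) H

/-- Circular distance between cluster indices. -/
def circDist {m : ℕ} (i j : Fin m) : ℕ := min (i - j : Fin m).val (j - i : Fin m).val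

/-- The circular graph: given a cluster assignment `c`, an edge is a friendship iff
its endpoints lie in clusters at circular distance at most `k`. -/
def circular {n m : ℕ} (c : Fin n → Fin m) (k : ℕ) : SignedGraph n :=
  fun u v => decide (circDist (c u) (c v) ≤ k)

/-- The jammed state `J_n`: three fixed clusters of size `n/3`, friendships inside
clusters, enmities across. -/
def Jn (n : ℕ) : SignedGraph n :=
  fun u v => decide (u.val / (n / 3) = v.val / (n / 3))

/-- The signed graph obtained from `G` by flipping exactly the edges in `F`. -/
def perturb {n : ℕ} (G : SignedGraph n) (F : Finset (Sym2 (Fin n))) : SignedGraph n :=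
  fun u v => if s(u, v) ∈ F then !(G u v) else G u v

/-- The set of (undirected, non-diagonal) edges on which two signed graphs differ. -/
def diffEdges {n : ℕ} (G C : SignedGraph n) : Finset (Sym2 (Fin n)) :=
  univ.filter (fun p => ∃ u v : Fin n, p = s(u, v) ∧ u ≠ v ∧ G u v ≠ C u v)

/-- `C` is a closest balanced state to `G`: `C` is balanced and minimizes the number of
edges on which the signs differ from `G`. -/
def IsClosestBalanced {n : ℕ} (G C : SignedGraph n) : Prop :=
  Symm C ∧ IsBalanced C ∧
    ∀ C' : SignedGraph n, Symm C' → IsBalanced C' →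
      (diffEdges G C).card ≤ (diffEdges G C').card

/-- The two sides of the balanced state `B_n`: clusters `0, 1, 5` versus `2, 3, 4`. -/
def sixPart (i : Fin 6) : Bool := decide (i = 0 ∨ i = 1 ∨ i = 5)

/-- The balanced state `B_n` whose friendship parts are `V₀ ∪ V₁ ∪ V₅` and `V₂ ∪ V₃ ∪ V₄`. -/
def Bgraph {n : ℕ} (c : Fin n → Fin 6) : SignedGraph n :=
  fun u v => sixPart (c u) == sixPart (c v)

/-- The number of good triads containing the red edge `(u,v)`: imbalanced triads in which
the red edge has strictly greater rank than each of the other two edges. -/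
def goodCount {n : ℕ} (G : SignedGraph n) (u v : Fin n) : ℕ :=
  (univ.filter (fun w => w ≠ u ∧ w ≠ v ∧ ¬ BalancedTriad G u v w ∧
    rank G v w < rank G u v ∧ rank G u w < rank G u v)).card

/-- The number of bad triads containing the red edge `(u,v)`: imbalanced triads that
are not good. -/
def badCount {n : ℕ} (G : SignedGraph n) (u v : Fin n) : ℕ :=
  (univ.filter (fun w => w ≠ u ∧ w ≠ v ∧ ¬ BalancedTriad G u v w ∧
    ¬ (rank G v w < rank G u v ∧ rank G u w < rank G u v))).card
/-!
Take `4k + 2` clusters of two vertices each, arranged on a cycle, and let two vertices be friends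
iff their clusters are at circular distance at most `k`. For an edge between clusters `i` and `j`,
the vertices completing it to an imbalanced triad lie in the symmetric difference of the
radius-`k` arcs around `i` and around `j` (or around the antipode of `j`), which has at most `2k`
clusters; so every rank is at most `4k`, less than `(n - 2) / 2` for `n = 8k + 4`. Three clusters
spaced `k + 1` apart span an imbalanced triad. Putting the second vertex of cluster `i` at
`4k + 2 + σ⁻¹ i` for a permutation `σ`, the friends of vertex `4k + 2 + t` among the first
vertices form the arc around `σ t`, so the graph determines `σ`; this gives
`(4k + 2)! ≥ n ^ (n / 8)` jammed graphs.
-/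

open Function
open scoped Nat

lemma card_le_of_forall_val_mem_Icc_union {m : ℕ} {s : Finset (Fin m)} {a₁ b₁ a₂ b₂ : ℕ}
    (h : ∀ l ∈ s, l.val ∈ Icc a₁ b₁ ∪ Icc a₂ b₂) :
    #s ≤ (b₁ + 1 - a₁) + (b₂ + 1 - a₂) := by
  refine (card_le_card_of_injOn Fin.val h Fin.val_injective.injOn).trans ?_
  exact (card_union_le _ _).trans (by rw [Nat.card_Icc, Nat.card_Icc])

section CircularDistance

variable {m : ℕ}

lemma circDist_eq_min (x y : Fin m) :
    circDist x y =
      min (x.val - y.val + (y.val - x.val)) (m - (x.val - y.val + (y.val - x.val))) := by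
  have := x.isLt
  have := y.isLt
  unfold circDist
  rcases lt_trichotomy x y with h | rfl | h
  · rw [Fin.coe_sub_iff_lt.mpr h, Fin.coe_sub_iff_le.mpr h.le]
    rw [Fin.lt_def] at h
    omega
  · simp [Fin.coe_sub_iff_le.mpr le_rfl]
  · rw [Fin.coe_sub_iff_le.mpr h.le, Fin.coe_sub_iff_lt.mpr h]
    rw [Fin.lt_def] at h
    omega

lemma circDist_comm (x y : Fin m) : circDist x y = circDist y x :=
  min_comm _ _

lemma circDist_self (x : Fin m) : circDist x x = 0 := by
  simp [circDist, Fin.coe_sub_iff_le.mpr le_rfl]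

lemma circDist_sub_right [NeZero m] (x y z : Fin m) : circDist (x - z) (y - z) = circDist x y := by
  simp only [circDist, sub_sub_sub_cancel_right]

lemma circDist_zero_sub [NeZero m] (x y : Fin m) : circDist 0 (y - x) = circDist x y := by
  rw [← circDist_sub_right x y x, sub_self]

end CircularDistance

section Arcs

variable {k : ℕ}

lemma eq_of_forall_circDist_le_iff {a b : Fin (4 * k + 2)}
    (h : ∀ i, circDist a i ≤ k ↔ circDist b i ≤ k) : a = b := by
  set d := b - a
  have h₀ : ∀ i, circDist 0 i ≤ k ↔ circDist d i ≤ k := fun i => by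
    simpa only [← circDist_sub_right a (i + a) a, ← circDist_sub_right b (i + a) a, sub_self,
      add_sub_cancel_right] using h (i + a)
  suffices d = 0 from (sub_eq_zero.mp this).symm
  by_contra hne
  have hpos : 0 < d.val := Fin.pos_iff_ne_zero.mpr hne
  have := d.isLt
  -- a cluster at distance exactly `k` from `d`, on the far side from `0`
  rcases Nat.lt_or_ge d.val (2 * k + 2) with hsmall | hlarge
  · have := h₀ ⟨d.val + k, by omega⟩
    simp only [circDist_eq_min, Fin.val_zero] at this
    omega
  · have := h₀ ⟨d.val - k, by omega⟩
    simp only [circDist_eq_min, Fin.val_zero] at this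
    omega

lemma card_imbalanced_clusters_le (i j : Fin (4 * k + 2)) :
    #{l | ¬ (circDist i j ≤ k ↔ (circDist j l ≤ k ↔ circDist i l ≤ k))} ≤ 2 * k := by
  set d := j - i
  rw [card_equiv (Equiv.subRight i)
    (t := {l | ¬ (circDist 0 d ≤ k ↔ (circDist d l ≤ k ↔ circDist 0 l ≤ k))}) fun l => by
      simp only [mem_filter, mem_univ, true_and, Equiv.subRight_apply, d, circDist_zero_sub,
        circDist_sub_right]]
  have := d.isLt
  -- With `e` the circular distance from `0` to `d`, the imbalanced clusters form two arcs of
  -- `min e (2k + 1 - e)` clusters each.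
  rcases (by omega : d.val ≤ k ∨ k < d.val ∧ d.val ≤ 2 * k ∨
      2 * k < d.val ∧ d.val ≤ 3 * k + 1 ∨ 3 * k + 1 < d.val) with h | h | h | h <;>
  [ refine (card_le_of_forall_val_mem_Icc_union (a₁ := k + 1) (b₁ := k + d.val)
      (a₂ := 3 * k + 2) (b₂ := 3 * k + 1 + d.val) ?_).trans (by omega);
    refine (card_le_of_forall_val_mem_Icc_union (a₁ := d.val - k) (b₁ := k)
      (a₂ := d.val + k + 1) (b₂ := 3 * k + 1) ?_).trans (by omega);
    refine (card_le_of_forall_val_mem_Icc_union (a₁ := k + 1) (b₁ := d.val - k - 1)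
      (a₂ := 3 * k + 2) (b₂ := d.val + k) ?_).trans (by omega);
    refine (card_le_of_forall_val_mem_Icc_union (a₁ := d.val - 3 * k - 1) (b₁ := k)
      (a₂ := d.val - k) (b₂ := 3 * k + 1) ?_).trans (by omega) ] <;>
  · intro l hl
    have := l.isLt
    simp only [mem_filter, mem_univ, true_and, circDist_eq_min, Fin.val_zero] at hl
    simp only [mem_union, mem_Icc]
    omega

end Arcs

lemma balancedTriad_iff {n : ℕ} (G : SignedGraph n) (u v w : Fin n) :
    BalancedTriad G u v w ↔ (G u v = true ↔ (G v w = true ↔ G u w = true)) := by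
  unfold BalancedTriad
  cases G u v <;> cases G v w <;> cases G u w <;> decide

section Circular

variable {n k : ℕ}

lemma balancedTriad_circular_iff {m : ℕ} (c : Fin n → Fin m) (u v w : Fin n) :
    BalancedTriad (circular c k) u v w ↔
      (circDist (c u) (c v) ≤ k ↔
        (circDist (c v) (c w) ≤ k ↔ circDist (c u) (c w) ≤ k)) := by
  simp only [balancedTriad_iff, circular, decide_eq_true_iff]

lemma circular_symm {m : ℕ} (c : Fin n → Fin m) : Symm (circular c k) := fun u v => by
  simp only [circular, circDist_comm]

lemma circular_self {m : ℕ} (c : Fin n → Fin m) (u : Fin n) : circular c k u u = true := by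
  simp [circular, circDist_self]

lemma rank_circular_le {s : ℕ} (c : Fin n → Fin (4 * k + 2)) (hc : ∀ l, #{w | c w = l} ≤ s)
    (u v : Fin n) : rank (circular c k) u v ≤ s * (2 * k) := by
  set T : Finset (Fin (4 * k + 2)) :=
    {l | ¬ (circDist (c u) (c v) ≤ k ↔ (circDist (c v) l ≤ k ↔ circDist (c u) l ≤ k))}
  calc rank (circular c k) u v ≤ #{w | c w ∈ T} := card_le_card fun w hw => by
        simp only [mem_filter, mem_univ, true_and, balancedTriad_circular_iff, T] at hw ⊢
        exact hw.2.2
    _ ≤ s * #T := card_le_mul_card_image_of_maps_to (fun w hw => (mem_filter.mp hw).2) s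
        fun l _ => (card_le_card fun w hw =>
          mem_filter.mpr ⟨mem_univ w, (mem_filter.mp hw).2⟩).trans (hc l)
    _ ≤ s * (2 * k) := Nat.mul_le_mul_left s (card_imbalanced_clusters_le _ _)

lemma not_isBalanced_circular (hk : 1 ≤ k) {c : Fin n → Fin (4 * k + 2)} (hc : Surjective c) :
    ¬ IsBalanced (circular c k) := by
  obtain ⟨u, hu⟩ := hc 0
  obtain ⟨v, hv⟩ := hc ⟨k + 1, by omega⟩
  obtain ⟨w, hw⟩ := hc ⟨2 * k + 2, by omega⟩
  have distinct {x y : Fin n} (h : (c x).val ≠ (c y).val) : x ≠ y := fun hxy => h (by rw [hxy])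
  intro hbal
  have := hbal u v w (distinct (by simp [hu, hv])) (distinct (by simp [hv, hw]; omega))
    (distinct (by simp [hu, hw]))
  simp only [balancedTriad_circular_iff, hu, hv, hw, circDist_eq_min, Fin.val_zero] at this
  omega

lemma isJammed_circular {s : ℕ} (hk : 1 ≤ k) {c : Fin n → Fin (4 * k + 2)} (hc : Surjective c)
    (hfib : ∀ l, #{w | c w = l} ≤ s) (hn : 4 * s * k + 2 < n) : IsJammed (circular c k) := by
  refine ⟨not_isBalanced_circular hk hc, fun u v _ => ?_⟩
  have := rank_circular_le c hfib u v
  have : 2 * (s * (2 * k)) = 4 * s * k := by ring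
  omega

end Circular

lemma card_fiber_append_le_two {a b : ℕ} {α : Type*} [DecidableEq α] {f : Fin a → α}
    {g : Fin b → α} (hf : Injective f) (hg : Injective g) (x : α) :
    #{w | Fin.append f g w = x} ≤ 2 := by
  have fiber_le_one : ∀ {c : ℕ} {h : Fin c → α}, Injective h → #{i | h i = x} ≤ 1 :=
    fun hh => card_le_one.mpr fun i hi j hj =>
      hh ((mem_filter.mp hi).2.trans (mem_filter.mp hj).2.symm)
  rw [card_filter, Fin.sum_univ_add]
  simp only [Fin.append_left, Fin.append_right, ← card_filter]
  have := fiber_le_one hf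
  have := fiber_le_one hg
  omega

section Construction

variable {k : ℕ}

lemma circular_append_injective :
    Injective fun σ : Equiv.Perm (Fin (4 * k + 2)) => circular (Fin.append id σ) k := by
  intro σ τ h
  ext t : 1
  refine eq_of_forall_circDist_le_iff fun i => ?_
  have hti := congrFun (congrFun h (Fin.natAdd _ t)) (Fin.castAdd _ i)
  simpa only [circular, Fin.append_left, Fin.append_right, id_eq, decide_eq_decide] using hti

lemma isJammed_circular_append (hk : 1 ≤ k) (σ : Equiv.Perm (Fin (4 * k + 2))) :
    IsJammed (circular (Fin.append id σ) k) :=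
  isJammed_circular (s := 2) hk (fun l => ⟨Fin.castAdd _ l, Fin.append_left _ _ _⟩)
    (card_fiber_append_le_two injective_id σ.injective) (by omega)

lemma factorial_le_card_jammed (hk : 1 ≤ k) :
    (4 * k + 2)! ≤ Nat.card {G : SignedGraph ((4 * k + 2) + (4 * k + 2)) //
      Symm G ∧ (∀ u, G u u = true) ∧ IsJammed G} :=
  calc (4 * k + 2)! = Nat.card (Equiv.Perm (Fin (4 * k + 2))) := by
        rw [Nat.card_perm, Nat.card_eq_fintype_card, Fintype.card_fin]
    _ ≤ _ := Nat.card_le_card_of_injective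
      (fun σ => ⟨circular (Fin.append id σ) k, circular_symm _, circular_self _,
        isJammed_circular_append hk σ⟩)
      fun _ _ h => circular_append_injective (congrArg Subtype.val h)

end Construction

lemma two_rpow_mul_logb {x : ℝ} (hx : 0 < x) (c : ℝ) :
    (2 : ℝ) ^ (c * x * Real.logb 2 x) = x ^ (c * x) := by
  rw [mul_comm, Real.rpow_mul zero_le_two, Real.rpow_logb two_pos (by norm_num) hx]

lemma four_mul_rpow_le_factorial (j : ℕ) :
    ((4 * j : ℕ) : ℝ) ^ ((j : ℝ) / 2) ≤ ((2 * j)! : ℝ) := by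
  have hsqrt : √((4 * j : ℕ) : ℝ) ≤ j + 1 :=
    Real.sqrt_le_iff.mpr ⟨by positivity, by push_cast; nlinarith [sq_nonneg ((j : ℝ) - 1)]⟩
  calc ((4 * j : ℕ) : ℝ) ^ ((j : ℝ) / 2) = √((4 * j : ℕ) : ℝ) ^ j := by
        rw [Real.sqrt_eq_rpow, ← Real.rpow_natCast, ← Real.rpow_mul (by positivity)]
        ring_nf
    _ ≤ ((j : ℝ) + 1) ^ j := pow_le_pow_left₀ (Real.sqrt_nonneg _) hsqrt j
    _ ≤ ((2 * j)! : ℝ) := by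
        exact_mod_cast (Nat.le_mul_of_pos_left _ j.factorial_pos).trans
          (two_mul j ▸ Nat.factorial_mul_pow_le_factorial)

/-- There are at least `2^(c n log₂ n)` jammed states for large `n ≡ 4 (mod 8)`. -/
theorem counting_jammed_superexp :
    ∃ c : ℝ, 0 < c ∧ ∃ N : ℕ, ∀ n : ℕ, N ≤ n → n % 8 = 4 →
      (2 : ℝ) ^ (c * n * Real.logb 2 n) ≤
        (Nat.card {G : SignedGraph n //
          Symm G ∧ (∀ u, G u u = true) ∧ IsJammed G} : ℝ) := by
  refine ⟨1 / 8, by norm_num, 12, fun n hn hmod => ?_⟩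
  obtain ⟨k, hk, rfl⟩ : ∃ k, 1 ≤ k ∧ n = (4 * k + 2) + (4 * k + 2) :=
    ⟨n / 8, by omega, by omega⟩
  have hroot := four_mul_rpow_le_factorial (2 * k + 1)
  rw [show 2 * (2 * k + 1) = 4 * k + 2 by ring,
    show 4 * (2 * k + 1) = (4 * k + 2) + (4 * k + 2) by ring] at hroot
  rw [two_rpow_mul_logb (by positivity)]
  calc _ = (((4 * k + 2) + (4 * k + 2) : ℕ) : ℝ) ^ (((2 * k + 1 : ℕ) : ℝ) / 2) := by
        push_cast; ring_nf
    _ ≤ ((4 * k + 2)! : ℝ) := hroot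
    _ ≤ _ := mod_cast factorial_le_card_jammed hk
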